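/- Let n*, ℓ*, d ∈ ℕ, let ℓ ≥ 1, and let g : ℕ → ℕ → ℕ satisfy: (i) g(i, n) = 0 whenever i < n*, or n < i, or n > i + d; (ii) g(i + ℓ, n + ℓ) = g(i, n) for all i ≥ n* + ℓ* and all n. Define F(n) = Σ_{i=n*}^{n} g(i, n). Then the width sup_{n ≥ n*} F(n) is attained and equals max { F(n) : n* ≤ n ≤ n* + ℓ* + ℓ + d − 1 }. -/

import Mathlib

/-!
Branches are shorter than `d + 1`, so the layer `F n` only involves branches rooted at levels
`i ≥ n - d`; once `n - d ≥ n* + ℓ*` all of them lie in the periodic part, and shifting every root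
by `ℓ` gives `F (n + ℓ) = F n`. Hence every value of `F` already occurs in the window
`n* ≤ n < n* + ℓ* + d + ℓ`, and the maximum over that finite window is the width.
-/

open Finset

theorem sum_Icc_eq_sum_Icc_of_eq_zero {M : Type*} [AddCommMonoid M] {f : ℕ → M} {a b n : ℕ}
    (hab : a ≤ b) (hf : ∀ i, i < b → f i = 0) :
    ∑ i ∈ Icc a n, f i = ∑ i ∈ Icc b n, f i := by
  refine (sum_subset (Icc_subset_Icc_left hab) fun i hi hib => hf i ?_).symm
  simp only [mem_Icc] at hi hib
  omega

theorem sum_Icc_layer_add_period {M : Type*} [AddCommMonoid M] {g : ℕ → ℕ → M}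
    {a b d ℓ n : ℕ} (hab : a ≤ b) (hdepth : ∀ i n, i + d < n → g i n = 0)
    (hper : ∀ i n, b ≤ i → g (i + ℓ) (n + ℓ) = g i n) (hn : b + d ≤ n) :
    ∑ i ∈ Icc a (n + ℓ), g i (n + ℓ) = ∑ i ∈ Icc a n, g i n := by
  rw [sum_Icc_eq_sum_Icc_of_eq_zero (b := b + ℓ) (by omega) fun i hi => hdepth i _ (by omega),
    sum_Icc_eq_sum_Icc_of_eq_zero hab fun i hi => hdepth i _ (by omega),
    ← map_add_right_Icc, sum_map]
  exact sum_congr rfl fun i hi => hper i n (mem_Icc.mp hi).1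

theorem exists_eq_of_add_period {α : Type*} {F : ℕ → α} {a N ℓ : ℕ} (hℓ : 0 < ℓ) (ha : a ≤ N)
    (hper : ∀ n, N ≤ n → F (n + ℓ) = F n) (n : ℕ) (hn : a ≤ n) :
    ∃ m, a ≤ m ∧ m < N + ℓ ∧ F n = F m := by
  induction n using Nat.strong_induction_on with
  | _ n ih =>
    by_cases hsmall : n < N + ℓ
    · exact ⟨n, hn, hsmall, rfl⟩
    · obtain ⟨m, ham, hmN, hm⟩ := ih (n - ℓ) (by omega) (by omega)
      refine ⟨m, ham, hmN, ?_⟩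
      rw [← hm, ← hper (n - ℓ) (by omega), Nat.sub_add_cancel (by omega)]

/-- The width `sup_{n ≥ n*} F n` of a tree with periodic branch layer counts is
attained and equals the maximum of `F` over the finite window
`n* ≤ n ≤ n* + ℓ* + ℓ + d − 1`. -/
theorem stmt4 (nstar lstar d ℓ : ℕ) (hℓ : 1 ≤ ℓ) (g : ℕ → ℕ → ℕ)
    (h0 : ∀ i n : ℕ, (i < nstar ∨ n < i ∨ i + d < n) → g i n = 0)
    (hper : ∀ i n : ℕ, nstar + lstar ≤ i → g (i + ℓ) (n + ℓ) = g i n)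
    (F : ℕ → ℕ) (hF : ∀ n : ℕ, F n = ∑ i ∈ Finset.Icc nstar n, g i n) :
    (∃ n0 : ℕ, nstar ≤ n0 ∧ n0 ≤ nstar + lstar + ℓ + d - 1 ∧
        ∀ n : ℕ, nstar ≤ n → F n ≤ F n0) ∧
    sSup {x : ℕ | ∃ n : ℕ, nstar ≤ n ∧ F n = x}
      = (Finset.Icc nstar (nstar + lstar + ℓ + d - 1)).sup F := by
  have hperF : ∀ n, nstar + lstar + d ≤ n → F (n + ℓ) = F n := fun n hn => by
    simp only [hF]
    exact sum_Icc_layer_add_period (Nat.le_add_right _ _)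
      (fun i n hi => h0 i n (Or.inr (Or.inr hi))) hper hn
  obtain ⟨n0, hn0, hn0max⟩ := exists_max_image (Icc nstar (nstar + lstar + ℓ + d - 1)) F
    ⟨nstar, mem_Icc.mpr ⟨le_rfl, by omega⟩⟩
  have hmax : ∀ n, nstar ≤ n → F n ≤ F n0 := fun n hn => by
    obtain ⟨m, hm, hmN, hFm⟩ := exists_eq_of_add_period hℓ (by omega) hperF n hn
    exact hFm ▸ hn0max m (mem_Icc.mpr ⟨hm, by omega⟩)
  refine ⟨⟨n0, (mem_Icc.mp hn0).1, (mem_Icc.mp hn0).2, hmax⟩, ?_⟩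
  have hwidth : IsGreatest {x | ∃ n, nstar ≤ n ∧ F n = x} (F n0) :=
    ⟨⟨n0, (mem_Icc.mp hn0).1, rfl⟩, by rintro _ ⟨n, hn, rfl⟩; exact hmax n hn⟩
  rw [hwidth.csSup_eq]
  exact le_antisymm (le_sup hn0) (Finset.sup_le hn0max)
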